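/- Let m ∈ ℝ, σ > 0, ς ∈ (0,1) and ε ≥ 0. Define the Gaussian membership function μ(x) = exp(−(x − m)²/(2σ²)) and the selected membership function μ⁺(x) = (μ(x) + ε)/((1 − ς)·μ(x) + ς + ε). Then μ⁺(m) = 1, and for every x ≠ m one has μ⁺(x) < 1; that is, μ⁺ attains its unique global maximum, with value 1, at the center m of the original Gaussian fuzzy set. -/

import Mathlib

/-! The selection map `t ↦ (t + ε) / ((1 - ς) t + ς + ε)` fixes `1`, and its denominator exceeds
its numerator by `ς (1 - t)`, so it sends every membership degree `t < 1` strictly below `1`.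
A Gaussian attains the value `1` exactly at its center. -/

noncomputable section

def selectMembership (ς ε t : ℝ) : ℝ := (t + ε) / ((1 - ς) * t + ς + ε)

theorem selectMembership_one {ς ε : ℝ} (hε : 1 + ε ≠ 0) : selectMembership ς ε 1 = 1 := by
  rw [selectMembership, show (1 - ς) * 1 + ς + ε = 1 + ε by ring]
  exact div_self hε

theorem selectMembership_lt_one {ς ε t : ℝ} (hς : 0 < ς) (ht : t < 1) (htε : 0 ≤ t + ε) :
    selectMembership ς ε t < 1 := by
  have hden : (1 - ς) * t + ς + ε = (t + ε) + ς * (1 - t) := by ring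
  have hgap : 0 < ς * (1 - t) := mul_pos hς (sub_pos.mpr ht)
  rw [selectMembership, hden, div_lt_one (by linarith)]
  linarith

theorem exp_neg_sq_div_lt_one {x m σ : ℝ} (hx : x ≠ m) (hσ : σ ≠ 0) :
    Real.exp (-(x - m) ^ 2 / (2 * σ ^ 2)) < 1 := by
  have hsq : 0 < (x - m) ^ 2 := by have := sub_ne_zero.mpr hx; positivity
  exact Real.exp_lt_one_iff.mpr (div_neg_of_neg_of_pos (neg_neg_of_pos hsq) (by positivity))

end

/-- UNFIS Lemma 2 (Gaussian case): for a Gaussian membership function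
`μ(x) = exp(−(x−m)²/(2σ²))` with center `m` and width `σ > 0`, and the
selected membership function `μ⁺(x) = (μ(x)+ε)/((1−ς)·μ(x)+ς+ε)` with
`ς ∈ (0,1)` and `ε ≥ 0`, the function `μ⁺` attains its unique global
maximum, with value 1, at the center `m`. -/
theorem unfis_gaussian_selected_center_preserved
    (m σ ς ε : ℝ) (hσ : 0 < σ) (hς : ς ∈ Set.Ioo (0 : ℝ) 1) (hε : 0 ≤ ε)
    (μ μp : ℝ → ℝ)
    (hμ : ∀ x, μ x = Real.exp (-(x - m) ^ 2 / (2 * σ ^ 2)))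
    (hμp : ∀ x, μp x = (μ x + ε) / ((1 - ς) * μ x + ς + ε)) :
    μp m = 1 ∧ ∀ x, x ≠ m → μp x < 1 := by
  have hsel : ∀ x, μp x = selectMembership ς ε (μ x) := hμp
  refine ⟨?_, fun x hx => ?_⟩
  · have hμm : μ m = 1 := by simp [hμ]
    rw [hsel, hμm, selectMembership_one (by linarith)]
  · have hμx : μ x < 1 := (hμ x).symm ▸ exp_neg_sq_div_lt_one hx hσ.ne'
    have hμx_pos : 0 < μ x := (hμ x).symm ▸ Real.exp_pos _
    rw [hsel]
    exact selectMembership_lt_one hς.1 hμx (by linarith)
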